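/- For all nonnegative integers p and q, the number of weighted (p,q) Delannoy paths equals c_{p,q} = Σ_{k=0}^{min(p,q)} (p+q)!/((q−k)!·(p−k)!·k!); consequently weighted (p,q) Delannoy paths are equinumerous with ssymmetric (2p,2q) clans. -/
import Mathlib


/-- The three kinds of steps of a Delannoy path: `E = (1,0)`, `N = (0,1)`, `D = (1,1)`. -/
inductive DStep : Type
  | E : DStep
  | N : DStep
  | D : DStep
  deriving DecidableEq

/-- The lattice vector of a step. -/
def DStep.vec : DStep → ℕ × ℕ
  | DStep.E => (1, 0)
  | DStep.N => (0, 1)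
  | DStep.D => (1, 1)

/-- Validity of the labels of a weighted Delannoy path starting at the lattice point `st`:
an `E` or `N` step is labelled `1`, and a `D` step starting at `(a,b)` carries a label `m`
with `2 ≤ m ≤ 2(a+b+1)+1`. -/
def ValidLabels : ℕ × ℕ → List (DStep × ℕ) → Prop
  | _, [] => True
  | st, (s, m) :: rest =>
      (match s with
        | DStep.E => m = 1
        | DStep.N => m = 1
        | DStep.D => 2 ≤ m ∧ m ≤ 2 * (st.1 + st.2 + 1) + 1) ∧
      ValidLabels (st + s.vec) rest

def Gm (p q k : ℕ) : ℕ := (p + q).choose p * p.choose k * q.choose k * k.factorial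

def Sm (p q : ℕ) : ℕ := ∑ k ∈ Finset.range (p + q + 1), Gm p q k

lemma Gm_zero_of_lt {p q k : ℕ} (h : p < k ∨ q < k) : Gm p q k = 0 := by
  rcases h with h | h <;> simp [Gm, Nat.choose_eq_zero_of_lt h]

lemma Sm_eq_sum {p q N : ℕ} (h : p + q + 1 ≤ N) :
    ∑ k ∈ Finset.range N, Gm p q k = Sm p q := by
  rw [Sm, Finset.sum_subset (Finset.range_subset_range.2 h)]
  intro k _ hk
  simp only [Finset.mem_range, not_lt] at hk
  exact Gm_zero_of_lt (Or.inl (by omega))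

lemma Gm_zero (p q : ℕ) : Gm p q 0 = (p + q).choose p := by simp [Gm]

lemma Gm_rec (p q k : ℕ) :
    Gm (p + 1) (q + 1) (k + 1)
      = Gm p (q + 1) (k + 1) + Gm (p + 1) q (k + 1) + 2 * (p + q + 1) * Gm p q k := by
  have h1 : (p + 1 + (q + 1)).choose (p + 1)
      = (p + q + 1).choose p + (p + q + 1).choose (p + 1) := by
    have := Nat.choose_succ_succ' (p + q + 1) p
    convert this using 2 <;> omega
  have h2 : (p + 1).choose (k + 1) = p.choose k + p.choose (k + 1) := Nat.choose_succ_succ' p k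
  have h3 : (q + 1).choose (k + 1) = q.choose k + q.choose (k + 1) := Nat.choose_succ_succ' q k
  have h4 : (q + 1) * q.choose k = (q + 1).choose (k + 1) * (k + 1) := by
    have h := Nat.add_one_mul_choose_eq q k
    simpa [Nat.succ_eq_add_one] using h
  have h5 : (p + 1) * p.choose k = (p + 1).choose (k + 1) * (k + 1) := by
    have h := Nat.add_one_mul_choose_eq p k
    simpa [Nat.succ_eq_add_one] using h
  have h6 : (q + 1) * (p + q + 1).choose p = (p + q + 1) * (p + q).choose p := by
    have e1 : (p + q + 1) * (p + q).choose q = (p + q + 1).choose (q + 1) * (q + 1) := by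
      have h := Nat.add_one_mul_choose_eq (p + q) q
      simpa [Nat.succ_eq_add_one] using h
    have e2 : (p + q).choose q = (p + q).choose p := by
      rw [Nat.add_comm p q]; exact Nat.choose_symm_add
    have e3 : (p + q + 1).choose (q + 1) = (p + q + 1).choose p := by
      have := Nat.choose_symm_add (a := q + 1) (b := p)
      rw [show q + 1 + p = p + q + 1 by omega] at this
      exact this
    rw [e2, e3] at e1
    rw [mul_comm]
    exact e1.symm
  have h7 : (p + 1) * (p + q + 1).choose (p + 1) = (p + q + 1) * (p + q).choose p := by
    have h := Nat.add_one_mul_choose_eq (p + q) p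
    rw [mul_comm]
    exact h.symm
  -- key identity
  set A := (p + q + 1).choose p with hA
  set B := (p + q + 1).choose (p + 1) with hB
  set c := p.choose k with hc
  set d := p.choose (k + 1) with hd
  set e := q.choose k with he
  set f := q.choose (k + 1) with hf
  have key : (k + 1) * (A * (c * (e + f)) + B * (e * (c + d)))
      = 2 * (p + q + 1) * ((p + q).choose p * (c * e)) := by
    have k1 : (k + 1) * (e + f) = (q + 1) * e := by
      rw [← h3, mul_comm]; exact h4.symm
    have k2 : (k + 1) * (c + d) = (p + 1) * c := by
      rw [← h2, mul_comm]; exact h5.symm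
    calc (k + 1) * (A * (c * (e + f)) + B * (e * (c + d)))
        = A * c * ((k + 1) * (e + f)) + B * e * ((k + 1) * (c + d)) := by ring
      _ = A * c * ((q + 1) * e) + B * e * ((p + 1) * c) := by rw [k1, k2]
      _ = c * e * ((q + 1) * A + (p + 1) * B) := by ring
      _ = c * e * ((p + q + 1) * (p + q).choose p + (p + q + 1) * (p + q).choose p) := by
          rw [h6, h7]
      _ = 2 * (p + q + 1) * ((p + q).choose p * (c * e)) := by ring
  have hq1 : (p + (q + 1)).choose p = A := by rw [show p + (q + 1) = p + q + 1 by omega, hA]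
  have hp1 : (p + 1 + q).choose (p + 1) = B := by rw [show p + 1 + q = p + q + 1 by omega, hB]
  simp only [Gm, h1, h2, h3, hq1, hp1, Nat.factorial_succ, ← hc, ← hd, ← he, ← hf]
  zify
  push_cast
  linear_combination (k.factorial : ℤ) * (by exact_mod_cast key :
    ((k : ℤ) + 1) * (A * (c * (e + f)) + B * (e * (c + d)))
      = 2 * ((p : ℤ) + q + 1) * ((p + q).choose p * (c * e)))

lemma Sm_p0 (p : ℕ) : Sm p 0 = 1 := by
  rw [Sm]
  rw [Finset.sum_eq_single 0]
  · simp [Gm]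
  · intro k _ hk
    obtain ⟨j, rfl⟩ : ∃ j, k = j + 1 := ⟨k - 1, by omega⟩
    exact Gm_zero_of_lt (Or.inr (by omega))
  · simp

lemma Sm_0q (q : ℕ) : Sm 0 q = 1 := by
  rw [Sm]
  rw [Finset.sum_eq_single 0]
  · simp [Gm]
  · intro k _ hk
    obtain ⟨j, rfl⟩ : ∃ j, k = j + 1 := ⟨k - 1, by omega⟩
    exact Gm_zero_of_lt (Or.inl (by omega))
  · simp

lemma Sm_rec (p q : ℕ) :
    Sm (p + 1) (q + 1) = Sm p (q + 1) + Sm (p + 1) q + 2 * (p + q + 1) * Sm p q := by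
  have e0 : Gm (p + 1) (q + 1) 0 = Gm p (q + 1) 0 + Gm (p + 1) q 0 := by
    simp only [Gm_zero]
    have := Nat.choose_succ_succ' (p + q + 1) p
    have e1 : p + 1 + (q + 1) = p + q + 1 + 1 := by omega
    have e2 : p + (q + 1) = p + q + 1 := by omega
    have e3 : p + 1 + q = p + q + 1 := by omega
    rw [e1, e2, e3, this]
  have hL : Sm (p + 1) (q + 1)
      = (∑ k ∈ Finset.range (p + q + 2), Gm (p + 1) (q + 1) (k + 1))
        + Gm (p + 1) (q + 1) 0 := by
    rw [Sm]
    have : p + 1 + (q + 1) + 1 = (p + q + 2) + 1 := by omega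
    rw [this, Finset.sum_range_succ']
  have hA : Sm p (q + 1)
      = (∑ k ∈ Finset.range (p + q + 2), Gm p (q + 1) (k + 1)) + Gm p (q + 1) 0 := by
    rw [← Sm_eq_sum (by omega : p + (q + 1) + 1 ≤ p + q + 3),
      Finset.sum_range_succ']
  have hB : Sm (p + 1) q
      = (∑ k ∈ Finset.range (p + q + 2), Gm (p + 1) q (k + 1)) + Gm (p + 1) q 0 := by
    rw [← Sm_eq_sum (by omega : p + 1 + q + 1 ≤ p + q + 3), Finset.sum_range_succ']
  have hC : (∑ k ∈ Finset.range (p + q + 2), Gm p q k) = Sm p q :=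
    Sm_eq_sum (by omega)
  rw [hL, hA, hB, ← hC]
  rw [show (∑ k ∈ Finset.range (p + q + 2), Gm (p + 1) (q + 1) (k + 1))
      = ∑ k ∈ Finset.range (p + q + 2),
          (Gm p (q + 1) (k + 1) + Gm (p + 1) q (k + 1) + 2 * (p + q + 1) * Gm p q k)
    from Finset.sum_congr rfl fun k _ => Gm_rec p q k]
  rw [Finset.sum_add_distrib, Finset.sum_add_distrib, ← Finset.mul_sum, e0]
  ring

lemma Sm_eq_final (p q : ℕ) :
    (∑ k ∈ Finset.range (min p q + 1),
      Nat.factorial (p + q)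
        / (Nat.factorial (q - k) * Nat.factorial (p - k) * Nat.factorial k)) = Sm p q := by
  rw [← Sm_eq_sum (by omega : p + q + 1 ≤ p + q + 1)]
  rw [← Finset.sum_subset (Finset.range_subset_range.2 (by omega : min p q + 1 ≤ p + q + 1))]
  · apply Finset.sum_congr rfl
    intro k hk
    simp only [Finset.mem_range] at hk
    have hkp : k ≤ p := by omega
    have hkq : k ≤ q := by omega
    apply Nat.div_eq_of_eq_mul_left
    · positivity
    · have h1 : p.choose k * k.factorial * (p - k).factorial = p.factorial :=
        Nat.choose_mul_factorial_mul_factorial hkp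
      have h2 : q.choose k * k.factorial * (q - k).factorial = q.factorial :=
        Nat.choose_mul_factorial_mul_factorial hkq
      have h3 : (p + q).choose p * p.factorial * q.factorial = (p + q).factorial := by
        have h := Nat.add_choose_mul_factorial_mul_factorial p q
        rwa [show (p + q).choose q = (p + q).choose p by
          rw [Nat.add_comm p q]; exact Nat.choose_symm_add] at h
      rw [← h3, ← h1, ← h2, Gm]
      ring
  · intro k _ hk
    simp only [Finset.mem_range, not_lt] at hk
    exact Gm_zero_of_lt (by omega)

def StepOK (st : ℕ × ℕ) : DStep × ℕ → Prop
  | (DStep.E, m) => m = 1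
  | (DStep.N, m) => m = 1
  | (DStep.D, m) => 2 ≤ m ∧ m ≤ 2 * (st.1 + st.2 + 1) + 1

lemma validLabels_cons (st : ℕ × ℕ) (x : DStep × ℕ) (rest : List (DStep × ℕ)) :
    ValidLabels st (x :: rest) ↔ StepOK st x ∧ ValidLabels (st + x.1.vec) rest := by
  obtain ⟨s, m⟩ := x
  cases s <;> exact Iff.rfl

abbrev vsum (L : List (DStep × ℕ)) : ℕ × ℕ := (L.map (fun x => x.1.vec)).sum

@[simp] lemma vsum_nil : vsum [] = 0 := rfl

@[simp] lemma vsum_cons (x : DStep × ℕ) (M : List (DStep × ℕ)) :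
    vsum (x :: M) = x.1.vec + vsum M := by simp [vsum]

@[simp] lemma vsum_reverse (L : List (DStep × ℕ)) : vsum L.reverse = vsum L := by
  unfold vsum
  rw [List.map_reverse, List.sum_reverse]

lemma valid_append (x : DStep × ℕ) :
    ∀ (M : List (DStep × ℕ)) (st : ℕ × ℕ),
      ValidLabels st (M ++ [x]) ↔ ValidLabels st M ∧ StepOK (st + vsum M) x := by
  intro M
  induction M with
  | nil =>
    intro st
    rw [List.nil_append, validLabels_cons]
    simp [ValidLabels]
  | cons y M ih =>
    intro st
    rw [List.cons_append, validLabels_cons, ih, validLabels_cons, vsum_cons,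
      ← add_assoc, and_assoc]

lemma valid_rev_cons (x : DStep × ℕ) (M : List (DStep × ℕ)) :
    ValidLabels (0, 0) ((x :: M).reverse)
      ↔ ValidLabels (0, 0) M.reverse ∧ StepOK (vsum M) x := by
  rw [List.reverse_cons, valid_append, vsum_reverse, Prod.mk_zero_zero, zero_add]

/-- Reversed weighted Delannoy paths to `(p,q)`. -/
abbrev RP (p q : ℕ) : Type :=
  {L : List (DStep × ℕ) // ValidLabels (0, 0) L.reverse ∧ vsum L = (p, q)}

lemma vsum_eq_zero {L : List (DStep × ℕ)} (h : vsum L = (0, 0)) : L = [] := by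
  cases L with
  | nil => rfl
  | cons x M =>
    exfalso
    rw [vsum_cons, Prod.ext_iff] at h
    obtain ⟨h1, h2⟩ := h
    simp only [Prod.fst_add, Prod.snd_add] at h1 h2
    cases hx : x.1 <;> rw [hx] at h1 h2 <;> simp [DStep.vec] at h1 h2 <;> omega

instance uniqueRP00 : Unique (RP 0 0) where
  default := ⟨[], trivial, rfl⟩
  uniq := fun x => Subtype.ext (vsum_eq_zero x.2.2)

/-- Adding a final `E` step (head of the reversed list). -/
def consE0 (p : ℕ) : RP p 0 → RP (p + 1) 0 := fun ⟨M, hM⟩ =>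
  ⟨(DStep.E, 1) :: M, by
    refine ⟨(valid_rev_cons _ _).2 ⟨hM.1, rfl⟩, ?_⟩
    rw [vsum_cons, hM.2]
    show ((1, 0) : ℕ × ℕ) + (p, 0) = (p + 1, 0)
    simp only [Prod.mk_add_mk, Prod.mk.injEq]
    refine ⟨?_, ?_⟩ <;> first | omega | trivial⟩

lemma consE0_bij (p : ℕ) : Function.Bijective (consE0 p) := by
  constructor
  · rintro ⟨M, hM⟩ ⟨M', hM'⟩ h
    simp only [consE0, Subtype.mk.injEq, List.cons.injEq] at h
    exact Subtype.ext h.2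
  · rintro ⟨L, hL⟩
    cases L with
    | nil =>
      exfalso
      have := hL.2
      simp [vsum, Prod.ext_iff] at this
    | cons x M =>
      obtain ⟨s, m⟩ := x
      have hv := hL.2
      rw [vsum_cons, Prod.ext_iff] at hv
      simp only [Prod.fst_add, Prod.snd_add] at hv
      have hok := (valid_rev_cons _ _).1 hL.1
      have h1 := hv.1; have h2 := hv.2
      cases s with
      | E =>
        simp only [DStep.vec] at h1 h2
        have hm : m = 1 := hok.2
        refine ⟨⟨M, hok.1, ?_⟩, ?_⟩
        · rw [Prod.ext_iff]
          exact ⟨by omega, by omega⟩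
        · simp only [consE0, Subtype.mk.injEq, List.cons.injEq]
          exact ⟨by rw [hm], trivial⟩
      | N =>
        exfalso; simp only [DStep.vec] at h2; omega
      | D =>
        exfalso; simp only [DStep.vec] at h2; omega

/-- Adding a final `N` step. -/
def consN0 (q : ℕ) : RP 0 q → RP 0 (q + 1) := fun ⟨M, hM⟩ =>
  ⟨(DStep.N, 1) :: M, by
    refine ⟨(valid_rev_cons _ _).2 ⟨hM.1, rfl⟩, ?_⟩
    rw [vsum_cons, hM.2]
    show ((0, 1) : ℕ × ℕ) + (0, q) = (0, q + 1)
    simp only [Prod.mk_add_mk, Prod.mk.injEq]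
    refine ⟨?_, ?_⟩ <;> first | omega | trivial⟩

lemma consN0_bij (q : ℕ) : Function.Bijective (consN0 q) := by
  constructor
  · rintro ⟨M, hM⟩ ⟨M', hM'⟩ h
    simp only [consN0, Subtype.mk.injEq, List.cons.injEq] at h
    exact Subtype.ext h.2
  · rintro ⟨L, hL⟩
    cases L with
    | nil =>
      exfalso
      have := hL.2
      simp [vsum, Prod.ext_iff] at this
    | cons x M =>
      obtain ⟨s, m⟩ := x
      have hv := hL.2
      rw [vsum_cons, Prod.ext_iff] at hv
      simp only [Prod.fst_add, Prod.snd_add] at hv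
      have hok := (valid_rev_cons _ _).1 hL.1
      have h1 := hv.1; have h2 := hv.2
      cases s with
      | N =>
        simp only [DStep.vec] at h1 h2
        have hm : m = 1 := hok.2
        refine ⟨⟨M, hok.1, ?_⟩, ?_⟩
        · rw [Prod.ext_iff]
          exact ⟨by omega, by omega⟩
        · simp only [consN0, Subtype.mk.injEq, List.cons.injEq]
          exact ⟨by rw [hm], trivial⟩
      | E =>
        exfalso; simp only [DStep.vec] at h1; omega
      | D =>
        exfalso; simp only [DStep.vec] at h1; omega

/-- The three-way decomposition by the final step. -/
def threeWay (p q : ℕ) :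
    RP p (q + 1) ⊕ RP (p + 1) q ⊕ (Fin (2 * (p + q + 1)) × RP p q) → RP (p + 1) (q + 1)
  | Sum.inl ⟨M, hM⟩ =>
      ⟨(DStep.E, 1) :: M, by
        refine ⟨(valid_rev_cons _ _).2 ⟨hM.1, rfl⟩, ?_⟩
        rw [vsum_cons, hM.2]
        show ((1, 0) : ℕ × ℕ) + (p, q + 1) = (p + 1, q + 1)
        simp only [Prod.mk_add_mk, Prod.mk.injEq]
        refine ⟨?_, ?_⟩ <;> first | omega | trivial⟩
  | Sum.inr (Sum.inl ⟨M, hM⟩) =>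
      ⟨(DStep.N, 1) :: M, by
        refine ⟨(valid_rev_cons _ _).2 ⟨hM.1, rfl⟩, ?_⟩
        rw [vsum_cons, hM.2]
        show ((0, 1) : ℕ × ℕ) + (p + 1, q) = (p + 1, q + 1)
        simp only [Prod.mk_add_mk, Prod.mk.injEq]
        refine ⟨?_, ?_⟩ <;> first | omega | trivial⟩
  | Sum.inr (Sum.inr (j, ⟨M, hM⟩)) =>
      ⟨(DStep.D, (j : ℕ) + 2) :: M, by
        refine ⟨(valid_rev_cons _ _).2 ⟨hM.1, ?_⟩, ?_⟩
        · rw [hM.2]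
          refine ⟨by omega, ?_⟩
          have hj := j.2
          change (j : ℕ) + 2 ≤ 2 * (p + q + 1) + 1
          omega
        · rw [vsum_cons, hM.2]
          show ((1, 1) : ℕ × ℕ) + (p, q) = (p + 1, q + 1)
          simp only [Prod.mk_add_mk, Prod.mk.injEq]
          refine ⟨?_, ?_⟩ <;> first | omega | trivial⟩

lemma threeWay_bij (p q : ℕ) : Function.Bijective (threeWay p q) := by
  constructor
  · rintro (⟨M, hM⟩ | ⟨M, hM⟩ | ⟨j, M, hM⟩) (⟨M', hM'⟩ | ⟨M', hM'⟩ | ⟨j', M', hM'⟩) h <;>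
      simp only [threeWay, Subtype.mk.injEq, List.cons.injEq, Prod.mk.injEq,
        reduceCtorEq, false_and, and_false, true_and, and_true] at h
    · subst h; rfl
    · subst h; rfl
    · obtain ⟨ha, hb⟩ := h
      have hj : j = j' := Fin.ext (by omega)
      subst hb; subst hj; rfl
  · rintro ⟨L, hL⟩
    cases L with
    | nil =>
      exfalso
      have := hL.2
      simp [vsum, Prod.ext_iff] at this
    | cons x M =>
      obtain ⟨s, m⟩ := x
      have hv := hL.2
      rw [vsum_cons, Prod.ext_iff] at hv
      simp only [Prod.fst_add, Prod.snd_add] at hv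
      have hok := (valid_rev_cons _ _).1 hL.1
      have h1 := hv.1; have h2 := hv.2
      cases s with
      | E =>
        simp only [DStep.vec] at h1 h2
        have hm : m = 1 := hok.2
        refine ⟨Sum.inl ⟨M, hok.1, ?_⟩, ?_⟩
        · rw [Prod.ext_iff]; exact ⟨by omega, by omega⟩
        · simp only [threeWay, Subtype.mk.injEq, List.cons.injEq]
          exact ⟨by rw [hm], trivial⟩
      | N =>
        simp only [DStep.vec] at h1 h2
        have hm : m = 1 := hok.2
        refine ⟨Sum.inr (Sum.inl ⟨M, hok.1, ?_⟩), ?_⟩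
        · rw [Prod.ext_iff]; exact ⟨by omega, by omega⟩
        · simp only [threeWay, Subtype.mk.injEq, List.cons.injEq]
          exact ⟨by rw [hm], trivial⟩
      | D =>
        simp only [DStep.vec] at h1 h2
        have hsum : vsum M = (p, q) := by
          rw [Prod.ext_iff]; exact ⟨by omega, by omega⟩
        have hok2 := hok.2
        rw [hsum] at hok2
        have hm2 : 2 ≤ m := hok2.1
        have hmle : m ≤ 2 * (p + q + 1) + 1 := by
          have := hok2.2
          change m ≤ 2 * (p + q + 1) + 1 at this
          exact this
        refine ⟨Sum.inr (Sum.inr (⟨m - 2, by omega⟩, ⟨M, hok.1, hsum⟩)), ?_⟩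
        simp only [threeWay, Subtype.mk.injEq, List.cons.injEq]
        refine ⟨?_, trivial⟩
        show (DStep.D, m - 2 + 2) = (DStep.D, m)
        rw [show m - 2 + 2 = m by omega]
lemma main_card : ∀ n p q : ℕ, p + q ≤ n → Nat.card (RP p q) = Sm p q ∧ Finite (RP p q) := by
  intro n
  induction n with
  | zero =>
    intro p q h
    obtain ⟨rfl, rfl⟩ : p = 0 ∧ q = 0 := by omega
    refine ⟨?_, inferInstance⟩
    rw [Nat.card_unique, Sm]
    simp [Gm]
  | succ n ih =>
    intro p q h
    match p, q with
    | 0, 0 =>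
      refine ⟨?_, inferInstance⟩
      rw [Nat.card_unique, Sm]
      simp [Gm]
    | p + 1, 0 =>
      obtain ⟨hc, hf⟩ := ih p 0 (by omega)
      haveI := hf
      refine ⟨?_, Finite.of_surjective _ (consE0_bij p).surjective⟩
      rw [← Nat.card_eq_of_bijective _ (consE0_bij p), hc, Sm_p0, Sm_p0]
    | 0, q + 1 =>
      obtain ⟨hc, hf⟩ := ih 0 q (by omega)
      haveI := hf
      refine ⟨?_, Finite.of_surjective _ (consN0_bij q).surjective⟩
      rw [← Nat.card_eq_of_bijective _ (consN0_bij q), hc, Sm_0q, Sm_0q]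
    | p + 1, q + 1 =>
      obtain ⟨c1, f1⟩ := ih p (q + 1) (by omega)
      obtain ⟨c2, f2⟩ := ih (p + 1) q (by omega)
      obtain ⟨c3, f3⟩ := ih p q (by omega)
      haveI := f1; haveI := f2; haveI := f3
      refine ⟨?_, Finite.of_surjective _ (threeWay_bij p q).surjective⟩
      rw [← Nat.card_eq_of_bijective _ (threeWay_bij p q), Nat.card_sum, Nat.card_sum,
        Nat.card_prod, c1, c2, c3, Sm_rec]
      rw [Nat.card_eq_fintype_card, Fintype.card_fin]
      ring

/-- The number of weighted `(p,q)` Delannoy paths equals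
`c_{p,q} = Σ_{k=0}^{min(p,q)} (p+q)!/((q-k)!·(p-k)!·k!)`, the number of ssymmetric
`(2p,2q)` clans. -/
theorem card_weighted_delannoy_paths (p q : ℕ) :
    Nat.card {L : List (DStep × ℕ) //
        ValidLabels (0, 0) L ∧ (L.map (fun x => x.1.vec)).sum = (p, q)}
      = ∑ k ∈ Finset.range (min p q + 1),
          Nat.factorial (p + q)
            / (Nat.factorial (q - k) * Nat.factorial (p - k) * Nat.factorial k) := by
  have e : {L : List (DStep × ℕ) //
      ValidLabels (0, 0) L ∧ (L.map (fun x => x.1.vec)).sum = (p, q)} ≃ RP p q :=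
    { toFun := fun ⟨L, hL⟩ => ⟨L.reverse, by
        rw [List.reverse_reverse]
        exact ⟨hL.1, by rw [vsum_reverse]; exact hL.2⟩⟩
      invFun := fun ⟨L, hL⟩ => ⟨L.reverse, hL.1, by show vsum L.reverse = (p, q); rw [vsum_reverse]; exact hL.2⟩
      left_inv := fun ⟨L, hL⟩ => by simp
      right_inv := fun ⟨L, hL⟩ => by simp }
  rw [Nat.card_congr e, (main_card (p + q) p q le_rfl).1, Sm_eq_final]
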